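/- arXiv:2408.02197 — 4 statements merged into one kernel-verified Lean document; each statement's English description precedes it below -/
import Mathlib

section
/- Let M be a free abelian group of rank n and N = Hom(M, ℤ) its dual. Let β = {μ₁,...,μₙ} ⊂ M and β' = {ρ₁,...,ρₙ} ⊂ N be linearly independent sets, and let M' ⊆ M and N' ⊆ N be the subgroups they generate. If A is the n×n integer matrix with entries a_{ij} = ρᵢ(μⱼ), then the product of the index of M' in M and the index of N' in N equals |det(A)|. -/
open Submodule Matrix

lemma key_card_quot_span {n : ℕ} (v : Fin n → (Fin n → ℤ)) (hv : LinearIndependent ℤ v) :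
    Nat.card ((Fin n → ℤ) ⧸ Submodule.span ℤ (Set.range v)) =
      (Matrix.of v).det.natAbs := by
  classical
  set P : Submodule ℤ (Fin n → ℤ) := Submodule.span ℤ (Set.range v) with hP
  let c : Module.Basis (Fin n) ℤ P := Module.Basis.span hv
  obtain ⟨m, snf⟩ := P.smithNormalForm (Pi.basisFun ℤ (Fin n))
  have hm : m = n := by
    have := Fintype.card_eq.mpr ⟨snf.bN.indexEquiv c⟩
    simpa using this
  subst hm
  have hcard : Nat.card ((Fin m → ℤ) ⧸ P) = ∏ i, (snf.a i).natAbs := by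
    have h1 : Nat.card ((Fin m → ℤ) ⧸ P) = P.toAddSubgroup.index := rfl
    rw [h1, snf.toAddSubgroup_index_eq_pow_mul_prod]
    simp [Ideal.span_singleton_toAddSubgroup_eq_zmultiples, Int.index_zmultiples]
  let σ : Fin m ≃ Fin m := Equiv.ofBijective snf.f
    (Finite.injective_iff_bijective.mp snf.f.injective)
  let f : (Fin m → ℤ) →ₗ[ℤ] (Fin m → ℤ) :=
    P.subtype ∘ₗ (snf.bM.equiv snf.bN (Equiv.refl _) : (Fin m → ℤ) →ₗ[ℤ] P)
  have hf : ∀ i, f (snf.bM i) = (snf.a i) • snf.bM (σ i) := by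
    intro i
    have : f (snf.bM i) = (snf.bN i : Fin m → ℤ) := by
      simp [f, Module.Basis.equiv_apply]
    rw [this, snf.snf i]
    rfl
  have hmat : LinearMap.toMatrix snf.bM snf.bM f =
      (Matrix.diagonal snf.a).submatrix σ.symm id := by
    ext k i
    rw [LinearMap.toMatrix_apply, hf, _root_.map_smul]
    simp only [Module.Basis.repr_self, Finsupp.smul_single, smul_eq_mul, mul_one,
      Finsupp.single_apply, Matrix.submatrix_apply, id_eq, Matrix.diagonal_apply,
      Equiv.symm_apply_eq]
    rcases eq_or_ne (σ i) k with h | h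
    · subst h
      simp
    · rw [if_neg h, if_neg fun hh => h hh.symm]
  have h1 : (LinearMap.det f).natAbs = ∏ i, (snf.a i).natAbs := by
    rw [← LinearMap.det_toMatrix snf.bM, hmat]
    have hperm : ((Matrix.diagonal snf.a).submatrix σ.symm id).det =
        (Equiv.Perm.sign σ.symm : ℤ) * (Matrix.diagonal snf.a).det := by
      exact Matrix.det_permute σ.symm (Matrix.diagonal snf.a)
    rw [hperm, Int.natAbs_mul, Int.units_natAbs, one_mul, Matrix.det_diagonal]
    exact map_prod Int.natAbsHom snf.a Finset.univ
  have h2 : (LinearMap.det (P.subtype ∘ₗ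
      ((Pi.basisFun ℤ (Fin m)).equiv c (Equiv.refl _) : (Fin m → ℤ) →ₗ[ℤ] P))).natAbs =
      (LinearMap.det f).natAbs := by
    have := LinearMap.associated_det_comp_equiv (P.subtype)
      ((Pi.basisFun ℤ (Fin m)).equiv c (Equiv.refl _)) (snf.bM.equiv snf.bN (Equiv.refl _))
    exact Int.natAbs_eq_iff_associated.mpr this
  have h3 : (Pi.basisFun ℤ (Fin m)).det (P.subtype ∘ c) =
      LinearMap.det (P.subtype ∘ₗ
        ((Pi.basisFun ℤ (Fin m)).equiv c (Equiv.refl _) : (Fin m → ℤ) →ₗ[ℤ] P)) :=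
    Module.Basis.det_comp_basis _ _ _
  have hcv : (P.subtype ∘ c : Fin m → Fin m → ℤ) = v := funext fun i => congrArg Subtype.val (Module.Basis.span_apply hv i)
  have h4 : (Pi.basisFun ℤ (Fin m)).det v = ((Matrix.of v)ᵀ).det := by
    rw [Module.Basis.det_apply]
    have hh : (Pi.basisFun ℤ (Fin m)).toMatrix v = (Matrix.of v)ᵀ := by
      ext i j
      simp [Module.Basis.toMatrix_apply]
    rw [hh]
  rw [hcard, ← h1, ← h2, ← h3, hcv, h4, Matrix.det_transpose]

/-- Lemma (`lemma: Det(A)`): for linearly independent families `β ⊆ M ≅ ℤⁿ` and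
`β' ⊆ N = Hom(M, ℤ)` generating subgroups `M' ⊆ M` and `N' ⊆ N`, the product of the
indices `[M : M'] · [N : N']` equals `|det (ρᵢ(μⱼ))|`. -/
theorem stmt0 (n : ℕ) (β : Fin n → (Fin n → ℤ))
    (β' : Fin n → Module.Dual ℤ (Fin n → ℤ))
    (hβ : LinearIndependent ℤ β) (hβ' : LinearIndependent ℤ β')
    (M' : Submodule ℤ (Fin n → ℤ)) (hM' : M' = Submodule.span ℤ (Set.range β))
    (N' : Submodule ℤ (Module.Dual ℤ (Fin n → ℤ)))
    (hN' : N' = Submodule.span ℤ (Set.range β'))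
    (A : Matrix (Fin n) (Fin n) ℤ) (hA : ∀ i j, A i j = β' i (β j)) :
    Nat.card ((Fin n → ℤ) ⧸ M') * Nat.card (Module.Dual ℤ (Fin n → ℤ) ⧸ N') =
      A.det.natAbs := by
  classical
  subst hM' hN'
  -- the equivalence Dual ℤ ℤⁿ ≃ ℤⁿ
  let φ : Module.Dual ℤ (Fin n → ℤ) ≃ₗ[ℤ] (Fin n → ℤ) := LinearEquiv.piRing ℤ ℤ (Fin n) ℤ
  let γ : Fin n → (Fin n → ℤ) := fun i => φ (β' i)
  have hγ : LinearIndependent ℤ γ := hβ'.map' φ.toLinearMap φ.ker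
  have hmapspan : (Submodule.span ℤ (Set.range β')).map (φ : Module.Dual ℤ (Fin n → ℤ) →ₗ[ℤ] (Fin n → ℤ)) =
      Submodule.span ℤ (Set.range γ) := by
    rw [Submodule.map_span]
    congr 1
    rw [← Set.range_comp]
    rfl
  have hcard2 : Nat.card (Module.Dual ℤ (Fin n → ℤ) ⧸ Submodule.span ℤ (Set.range β')) =
      Nat.card ((Fin n → ℤ) ⧸ Submodule.span ℤ (Set.range γ)) :=
    Nat.card_congr (Submodule.Quotient.equiv _ _ φ hmapspan).toEquiv
  have key1 := key_card_quot_span β hβ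
  have key2 := key_card_quot_span γ hγ
  have hAeq : A = (Matrix.of γ) * (Matrix.of β)ᵀ := by
    ext i j
    rw [hA]
    have hβj : β j = ∑ k, β j k • Pi.single k (1 : ℤ) := by
      ext l
      simp [Pi.single_apply]
    rw [hβj]
    simp only [map_sum, _root_.map_smul, smul_eq_mul]
    simp only [Matrix.mul_apply, Matrix.of_apply, Matrix.transpose_apply]
    refine Finset.sum_congr rfl fun k _ => ?_
    rw [mul_comm]
    congr 1
  rw [key1, hcard2, key2, hAeq, Matrix.det_mul, Matrix.det_transpose, Int.natAbs_mul, mul_comm]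
end

section
/- Let S ⊆ ℤⁿ be an affine semigroup, K a field of characteristic zero, and I a monomial ideal of K[S]. If α ∈ S and there exists ℓ ∈ ℤ_{>0} with ℓ·α ∈ supp(I), then for every p ∈ N ⊗ K, the induced homogeneous derivation ∂̄_{α,p} on K[S]/I (defined on monomials by x^m ↦ p(m)·x^{m+α}) is locally nilpotent. -/
open AddMonoidAlgebra

set_option synthInstance.maxHeartbeats 1000000
set_option maxHeartbeats 1000000

/-- If `α ∈ S` and some positive multiple `ℓ • α` lies in the support of the monomial
ideal `I`, then the induced homogeneous derivation `∂̄_{α,p}` of `K[S]/I`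
(sending `x̄^m ↦ p(m) • x̄^{m+α}`) is locally nilpotent, for every `p ∈ N ⊗ K`. -/
theorem stmt1 (n : ℕ) (K : Type*) [Field K] [CharZero K]
    (S : AddSubmonoid (Fin n → ℤ)) (hSfg : S.FG)
    (I : Ideal (AddMonoidAlgebra K S))
    (hImono : ∃ T : Set S, I = Ideal.span ((fun m => of' K S m) '' T))
    (α : S) (p : (Fin n → ℤ) →+ K)
    (ℓ : ℕ) (hℓ : 0 < ℓ) (hα : of' K S (ℓ • α) ∈ I)
    (D : Derivation K (AddMonoidAlgebra K S ⧸ I) (AddMonoidAlgebra K S ⧸ I))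
    (hD : ∀ m : S, D (Ideal.Quotient.mk I (of' K S m)) =
      p ↑m • Ideal.Quotient.mk I (of' K S (m + α))) :
    ∀ f, ∃ k : ℕ, (⇑D)^[k] f = 0 := by
  have h0 : ∀ j : ℕ, (⇑D)^[j] (0 : AddMonoidAlgebra K S ⧸ I) = 0 := by
    intro j
    induction j with
    | zero => rfl
    | succ j ih => rw [Function.iterate_succ_apply', ih, map_zero]
  have hpow : ∀ (k : ℕ) (f : AddMonoidAlgebra K S ⧸ I),
      (⇑D)^[k] f = (D.toLinearMap ^ k) f := by
    intro k f
    rw [Module.End.pow_apply]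
    rfl
  have hadd : ∀ (k : ℕ) (f g : AddMonoidAlgebra K S ⧸ I),
      (⇑D)^[k] (f + g) = (⇑D)^[k] f + (⇑D)^[k] g := by
    intro k f g
    simp only [hpow, map_add]
  have hsmul : ∀ (k : ℕ) (c : K) (f : AddMonoidAlgebra K S ⧸ I),
      (⇑D)^[k] (c • f) = c • (⇑D)^[k] f := by
    intro k c f
    simp only [hpow, map_smul]
  -- key computation on monomials
  have key : ∀ (m : S) (k : ℕ), ∃ c : K,
      (⇑D)^[k] (Ideal.Quotient.mk I (of' K S m)) =
        c • Ideal.Quotient.mk I (of' K S (m + k • α)) := by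
    intro m k
    induction k with
    | zero =>
      refine ⟨1, ?_⟩
      simp [zero_nsmul]
    | succ k ih =>
      obtain ⟨c, hc⟩ := ih
      refine ⟨c * p ↑(m + k • α), ?_⟩
      rw [Function.iterate_succ_apply', hc, D.map_smul, hD]
      rw [mul_smul]
      congr 2
      rw [succ_nsmul, ← add_assoc]
  -- monomials die at step ℓ
  have hmon : ∀ m : S, (⇑D)^[ℓ] (Ideal.Quotient.mk I (of' K S m)) = 0 := by
    intro m
    obtain ⟨c, hc⟩ := key m ℓ
    rw [hc]
    have hmem : of' K S (m + ℓ • α) ∈ I := by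
      have : of' K S (m + ℓ • α) = of' K S m * of' K S (ℓ • α) := by
        simp only [of'_apply, AddMonoidAlgebra.single_mul_single, one_mul]
      rw [this]
      exact I.mul_mem_left _ hα
    rw [Ideal.Quotient.eq_zero_iff_mem.mpr hmem, smul_zero]
  intro f
  obtain ⟨g, rfl⟩ := Ideal.Quotient.mk_surjective f
  induction g using AddMonoidAlgebra.induction_linear with
  | zero => exact ⟨0, by simp⟩
  | add f g hf hg =>
    obtain ⟨k1, h1⟩ := hf
    obtain ⟨k2, h2⟩ := hg
    refine ⟨k1 + k2, ?_⟩
    have e1 : (⇑D)^[k1 + k2] (Ideal.Quotient.mk I f) = 0 := by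
      rw [add_comm, Function.iterate_add_apply, h1, h0]
    have e2 : (⇑D)^[k1 + k2] (Ideal.Quotient.mk I g) = 0 := by
      rw [Function.iterate_add_apply, h2, h0]
    rw [map_add, hadd, e1, e2, add_zero]
  | single a b =>
    refine ⟨ℓ, ?_⟩
    have : (AddMonoidAlgebra.single a b : AddMonoidAlgebra K S) = b • of' K S a := by
      rw [of'_apply, AddMonoidAlgebra.smul_single, smul_eq_mul, mul_one]
    have e : Ideal.Quotient.mk I ((b • of' K S a : AddMonoidAlgebra K S)) =
        b • Ideal.Quotient.mk I (of' K S a) := rfl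
    rw [this, e, hsmul, hmon, smul_zero]
end

section
/- Let S be an affine semigroup, I ⊂ K[S] a monomial ideal, and α ∈ S with (ℤ_{≥0}·α) ∩ supp(I) = ∅. Then the induced derivation ∂̄_{α,p} on K[S]/I is locally nilpotent if and only if for every m ∈ S with p(m) ≠ 0 there exists ℓ ∈ ℤ_{≥0} with m + ℓ·α ∈ supp(I). -/
open AddMonoidAlgebra

set_option synthInstance.maxHeartbeats 1000000
set_option maxHeartbeats 1000000

/-- Let `α ∈ S` with `(ℤ_{≥0}·α) ∩ supp(I) = ∅` for the monomial ideal `I`. The induced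
derivation `∂̄_{α,p}` of `K[S]/I` is locally nilpotent iff for every `m ∈ S` with
`p(m) ≠ 0` there is `ℓ ≥ 0` with `m + ℓ·α ∈ supp(I)`. -/
theorem stmt4 (n : ℕ) (K : Type*) [Field K] [CharZero K]
    (S : AddSubmonoid (Fin n → ℤ)) (hSfg : S.FG)
    (I : Ideal (AddMonoidAlgebra K S))
    (hImono : ∃ T : Set S, I = Ideal.span ((fun m => of' K S m) '' T))
    (α : S) (p : (Fin n → ℤ) →+ K)
    (hdisj : ∀ ℓ : ℕ, of' K S (ℓ • α) ∉ I)
    (D : Derivation K (AddMonoidAlgebra K S ⧸ I) (AddMonoidAlgebra K S ⧸ I))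
    (hD : ∀ m : S, D (Ideal.Quotient.mk I (of' K S m)) =
      p ↑m • Ideal.Quotient.mk I (of' K S (m + α))) :
    (∀ f, ∃ k : ℕ, (⇑D)^[k] f = 0) ↔
      ∀ m : S, p ↑m ≠ 0 → ∃ ℓ : ℕ, of' K S (m + ℓ • α) ∈ I := by
  -- key iterate formula
  have key : ∀ (m : S) (k : ℕ), (⇑D)^[k] (Ideal.Quotient.mk I (of' K S m)) =
      (∏ i ∈ Finset.range k, p ↑(m + i • α)) •
        Ideal.Quotient.mk I (of' K S (m + k • α)) := by
    intro m k
    induction k with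
    | zero => simp
    | succ k ih =>
        rw [Function.iterate_succ_apply', ih, D.map_smul, hD, Finset.prod_range_succ,
          smul_smul]
        congr 2
        rw [succ_nsmul, add_assoc]
  have coef : ∀ (m : S) (i : ℕ), p ↑(m + i • α) = p ↑m + (i : K) * p ↑α := by
    intro m i
    push_cast
    rw [map_add, map_nsmul, nsmul_eq_mul]
  constructor
  · intro hln m hm
    -- find N such that all coefficients from N on are nonzero
    obtain ⟨N, hN⟩ : ∃ N : ℕ, ∀ j : ℕ, p ↑(m + (N + j) • α) ≠ 0 := by
      by_cases h : ∃ i : ℕ, p ↑(m + i • α) = 0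
      · obtain ⟨i, hi⟩ := h
        rw [coef] at hi
        refine ⟨i + 1, fun j => ?_⟩
        rw [coef]
        have hq : p ↑α ≠ 0 := by
          intro hq0
          rw [hq0, mul_zero, add_zero] at hi
          exact hm hi
        have : p ↑m + ((i + 1 + j : ℕ) : K) * p ↑α
            = (p ↑m + (i : K) * p ↑α) + ((1 + j : ℕ) : K) * p ↑α := by
          push_cast; ring
        rw [this, hi, zero_add]
        exact mul_ne_zero (Nat.cast_ne_zero.mpr (by omega)) hq
      · push_neg at h
        exact ⟨0, fun j => h _⟩
    obtain ⟨k, hk⟩ := hln (Ideal.Quotient.mk I (of' K S (m + N • α)))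
    rw [key] at hk
    have hprod : (∏ i ∈ Finset.range k, p ↑(m + N • α + i • α)) ≠ 0 := by
      rw [Finset.prod_ne_zero_iff]
      intro i _
      have : m + N • α + i • α = m + (N + i) • α := by
        rw [add_nsmul, add_assoc]
      rw [this]
      exact hN i
    have hz : Ideal.Quotient.mk I (of' K S (m + N • α + k • α)) = 0 := by
      rcases smul_eq_zero.mp hk with h1 | h2
      · exact absurd h1 hprod
      · exact h2
    refine ⟨N + k, ?_⟩
    rw [← Ideal.Quotient.eq_zero_iff_mem]
    rw [add_nsmul, ← add_assoc]
    exact hz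
  · intro h f
    obtain ⟨g, rfl⟩ := Ideal.Quotient.mk_surjective f
    have hmono : ∀ m : S, ∃ k : ℕ, (⇑D)^[k] (Ideal.Quotient.mk I (of' K S m)) = 0 := by
      intro m
      by_cases hp : p ↑m = 0
      · refine ⟨1, ?_⟩
        rw [key]
        have : (∏ i ∈ Finset.range 1, p ↑(m + i • α)) = p ↑m := by
          rw [Finset.prod_range_one, zero_nsmul, add_zero]
        rw [this, hp, zero_smul]
      · obtain ⟨ℓ, hℓ⟩ := h m hp
        refine ⟨ℓ, ?_⟩
        rw [key, Ideal.Quotient.eq_zero_iff_mem.mpr hℓ, smul_zero]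
    choose k0 hk0 using hmono
    set KK := g.coeff.support.sup k0 with hKK
    have hbig : ∀ m ∈ g.coeff.support, (⇑D)^[KK] (Ideal.Quotient.mk I (of' K S m)) = 0 := by
      intro m hms
      have hle : k0 m ≤ KK := Finset.le_sup hms
      obtain ⟨d, hd⟩ := Nat.exists_eq_add_of_le hle
      rw [hd, add_comm, Function.iterate_add_apply, hk0, Function.iterate_fixed (map_zero D)]
    refine ⟨KK, ?_⟩
    have hg : g = ∑ m ∈ g.coeff.support, (g.coeff m) • of' K S m := by
      conv_lhs => rw [← AddMonoidAlgebra.sum_coeff_single g]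
      rw [Finsupp.sum]
      refine Finset.sum_congr rfl fun m _ => ?_
      rw [of'_apply, AddMonoidAlgebra.smul_single, smul_eq_mul, mul_one]
    have hiter : ∀ x, (⇑D)^[KK] x = (D.toLinearMap ^ KK) x := by
      intro x
      rw [Module.End.pow_apply]
      rfl
    have hmk : (Ideal.Quotient.mk I) g
        = ∑ m ∈ g.coeff.support, g.coeff m • (Ideal.Quotient.mk I) (of' K S m) := by
      conv_lhs => rw [hg]
      rw [← Ideal.Quotient.mkₐ_eq_mk K I, map_sum]
      exact Finset.sum_congr rfl fun m _ => map_smul (Ideal.Quotient.mkₐ K I) _ _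
    rw [hiter, hmk, map_sum]
    refine Finset.sum_eq_zero fun m hms => ?_
    rw [map_smul, ← hiter, hbig m hms, smul_zero]
end

section
/- Let S = ℤ_{≥0}ⁿ and I a monomial ideal of the polynomial ring K[x₁,...,xₙ]. Then the natural map π: Der_I(K[x₁,...,xₙ]) → Der(K[x₁,...,xₙ]/I), given by ∂ ↦ ∂̄ with ∂̄(f̄) = ∂(f)‾, is a well-defined surjective K-linear map: every K-derivation of K[x₁,...,xₙ]/I lifts to a K-derivation of K[x₁,...,xₙ] preserving I. -/
open MvPolynomial

set_option synthInstance.maxHeartbeats 1000000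
set_option maxHeartbeats 1000000

/-- For `S = ℤ_{≥0}ⁿ` and a monomial ideal `I` of `K[x₁,…,xₙ]`, the natural map
`π : Der_I(K[x]) → Der(K[x]/I)` is surjective: every `K`-derivation of `K[x]/I` lifts
to a `K`-derivation of `K[x₁,…,xₙ]` preserving `I`. -/
theorem stmt11 (n : ℕ) (K : Type*) [Field K] [CharZero K]
    (I : Ideal (MvPolynomial (Fin n) K))
    (hImono : ∃ T : Set (Fin n →₀ ℕ),
      I = Ideal.span ((fun m => (monomial m (1 : K) : MvPolynomial (Fin n) K)) '' T))
    (D' : Derivation K (MvPolynomial (Fin n) K ⧸ I) (MvPolynomial (Fin n) K ⧸ I)) :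
    ∃ D : Derivation K (MvPolynomial (Fin n) K) (MvPolynomial (Fin n) K),
      (∀ f ∈ I, D f ∈ I) ∧
      ∀ f : MvPolynomial (Fin n) K,
        D' (Ideal.Quotient.mk I f) = Ideal.Quotient.mk I (D f) := by
  -- choose preimages of D'(x̄ᵢ)
  choose g hg using fun i : Fin n =>
    Ideal.Quotient.mk_surjective (I := I) (D' (Ideal.Quotient.mk I (X i)))
  set D : Derivation K (MvPolynomial (Fin n) K) (MvPolynomial (Fin n) K) :=
    mkDerivation K g with hD
  have key : ∀ f : MvPolynomial (Fin n) K,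
      D' (Ideal.Quotient.mk I f) = Ideal.Quotient.mk I (D f) := by
    intro f
    induction f using MvPolynomial.induction_on with
    | C a =>
        have h1 : (C a : MvPolynomial (Fin n) K) = algebraMap K _ a := rfl
        have : (Ideal.Quotient.mk I) (C a : MvPolynomial (Fin n) K)
            = algebraMap K (MvPolynomial (Fin n) K ⧸ I) a := by
          rw [h1]; rfl
        rw [derivation_C, this, Derivation.map_algebraMap, map_zero]
    | add p q hp hq =>
        rw [map_add, map_add, hp, hq, map_add, map_add]
    | mul_X p i hp =>
        rw [map_mul, Derivation.leibniz, Derivation.leibniz, map_add,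
          smul_eq_mul, smul_eq_mul, smul_eq_mul, smul_eq_mul, map_mul, map_mul, hp, hD,
          mkDerivation_X, hg i]
  refine ⟨D, fun f hf => ?_, key⟩
  have : D' (Ideal.Quotient.mk I f) = 0 := by
    rw [(Ideal.Quotient.eq_zero_iff_mem).mpr hf, map_zero]
  rw [key f] at this
  exact (Ideal.Quotient.eq_zero_iff_mem).mp this
end
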